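/- arXiv:2306.13228 — 2 statements merged into one kernel-verified Lean document; each statement's English description precedes it below -/
import Mathlib

section
/- As Δ → 0⁺, r_Δ converges uniformly to the cosine function on [0, π/2]: for every ε > 0 there exists δ > 0 such that 0 < Δ < δ implies |r_Δ(t) − cos t| < ε for all t ∈ [0, π/2]. Moreover, the first zero θ_Δ is a continuous function of Δ ∈ [0, ∞). -/
open MeasureTheory Set Filter

/-- `x` solves the delay equation `x''(t) + p(t)·x(t − τ(t)) = 0` on `I` in the
Carathéodory sense: `x` is differentiable on `I` and on `I` its derivative is an
indefinite integral of `-p(u)·x(u − τ(u))` (so `x` and its derivative are locally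
absolutely continuous there, and the equation holds for a.e. `t ∈ I`). -/
def SolvesDDE (p τ x : ℝ → ℝ) (I : Set ℝ) : Prop :=
  (∀ t ∈ I, HasDerivAt x (deriv x t) t) ∧
  (∀ t₀ ∈ I, ∀ t ∈ I, deriv x t = deriv x t₀ - ∫ u in t₀..t, p u * x (u - τ u))

/-- `r` is the solution `r_Δ` of `r''(t) + r(t − Δ) = 0`, `t ≥ 0`, with `r ≡ 1` on
`(-∞,0]` and `r'(0) = 0` (the derivative is an indefinite integral of `-r(· - Δ)`). -/
def IsDelayCosine (Δ : ℝ) (r : ℝ → ℝ) : Prop :=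
  (∀ t ≤ (0:ℝ), r t = 1) ∧
  (∀ t, 0 ≤ t → HasDerivAt r (deriv r t) t) ∧
  (∀ t, 0 ≤ t → deriv r t = - ∫ u in (0:ℝ)..t, r (u - Δ))

/-- `θ` is the first zero of `r` on `[0,∞)`. -/
def IsFirstZero (r : ℝ → ℝ) (θ : ℝ) : Prop :=
  0 < θ ∧ r θ = 0 ∧ ∀ t, 0 ≤ t → t < θ → 0 < r t

/-- `g(w) = ρ·r(θ − w − Δ)·χ_{[−Δ,0]}(w)`. -/
noncomputable def gAux (ρ Δ θ : ℝ) (r : ℝ → ℝ) : ℝ → ℝ :=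
  (Set.Icc (-Δ) (0:ℝ)).indicator fun w => ρ * r (θ - w - Δ)

/-- The double integral `∫_{-c}^0 (∫_{-c}^s max (β w) (g w) dw) ds`. -/
noncomputable def doubleInt (g β : ℝ → ℝ) (c : ℝ) : ℝ :=
  ∫ s in (-c)..(0:ℝ), ∫ w in (-c)..s, max (β w) (g w)

/-- The recursively defined sequences `β_n`, `ϖ_n` associated with `g`. -/
def IsBetaSeq (g : ℝ → ℝ) (β : ℕ → ℝ → ℝ) (ϖ : ℕ → ℝ) : Prop :=
  (∀ t ≤ (0:ℝ), β 0 t = 1) ∧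
  ∀ n : ℕ,
    (0 < ϖ n ∧ doubleInt g (β n) (ϖ n) = 1) ∧
    (∀ t, t ≤ -ϖ n → β (n+1) t = 1) ∧
    (∀ t, -ϖ n ≤ t → t ≤ 0 →
      β (n+1) t = 1 - ∫ s in (-ϖ n)..t, ∫ w in (-ϖ n)..s, max (β n w) (g w))

/-- `x` has a locally absolutely continuous derivative on `[a,b]`, with a.e. second
derivative `w`. -/
def HasSecondDerivAEOn (x w : ℝ → ℝ) (a b : ℝ) : Prop :=
  (∀ t ∈ Set.Icc a b, HasDerivAt x (deriv x t) t) ∧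
  (∀ t ∈ Set.Icc a b, deriv x t = deriv x a + ∫ u in a..t, w u)

/-!
Integrating twice, `r_Δ t = 1 - ∫₀ᵗ ∫₀ˢ r_Δ (u - Δ)` for `t ≥ 0`. A Gronwall argument for this
delayed double integral (Picard iteration, compared with `cosh`) gives `|r_Δ| ≤ cosh`, hence
`|r_Δ'(t)| ≤ T cosh T` for `t ≤ T`, and then `|r_Δ₁ - r_Δ₂| ≤ T cosh² T · |Δ₁ - Δ₂|` on `[0, T]`.
As `t ↦ cos (max t 0)` is `r_0`, this gives the uniform convergence to `cos`. At `θ_Δ` the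
derivative `-∫₀^θ r_Δ (u - Δ)` is negative, so `r_Δ` changes sign there, and such a transversal
first zero depends continuously on locally uniform perturbations of the function.
-/

open Topology intervalIntegral Real Nat

noncomputable def doublePrimitive (f : ℝ → ℝ) (t : ℝ) : ℝ :=
  ∫ s in (0:ℝ)..t, ∫ u in (0:ℝ)..s, f u

lemma continuous_primitive_zero {f : ℝ → ℝ} (hf : Continuous f) :
    Continuous fun s => ∫ u in (0:ℝ)..s, f u :=
  continuous_primitive (fun _ _ => hf.intervalIntegrable _ _) 0

lemma doublePrimitive_sub {f g : ℝ → ℝ} (hf : Continuous f) (hg : Continuous g) (t : ℝ) :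
    doublePrimitive (fun u => f u - g u) t = doublePrimitive f t - doublePrimitive g t := by
  rw [doublePrimitive, doublePrimitive, doublePrimitive,
    ← integral_sub ((continuous_primitive_zero hf).intervalIntegrable _ _)
      ((continuous_primitive_zero hg).intervalIntegrable _ _)]
  exact integral_congr fun s _ =>
    integral_sub (hf.intervalIntegrable _ _) (hg.intervalIntegrable _ _)

lemma abs_doublePrimitive_le {f g : ℝ → ℝ} {t : ℝ} (ht : 0 ≤ t) (hg : Continuous g)
    (hfg : ∀ u ∈ Icc 0 t, |f u| ≤ g u) : |doublePrimitive f t| ≤ doublePrimitive g t := by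
  rw [doublePrimitive, doublePrimitive, ← Real.norm_eq_abs]
  refine norm_integral_le_of_norm_le ht (ae_of_all _ fun s hs => ?_)
    ((continuous_primitive_zero hg).intervalIntegrable _ _)
  exact norm_integral_le_of_norm_le hs.1.le
    (ae_of_all _ fun u hu => hfg u ⟨hu.1.le, hu.2.trans hs.2⟩) (hg.intervalIntegrable _ _)

lemma integral_pow_div_factorial (k : ℕ) (t : ℝ) :
    ∫ u in (0:ℝ)..t, u ^ k / k ! = t ^ (k + 1) / (k + 1)! := by
  rw [intervalIntegral.integral_div, integral_pow, factorial_succ]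
  push_cast
  field_simp
  simp

lemma doublePrimitive_cosh_add_pow (M C : ℝ) (k : ℕ) (t : ℝ) :
    doublePrimitive (fun u => M * cosh u + C * (u ^ k / k !)) t =
      M * (cosh t - 1) + C * (t ^ (k + 2) / (k + 2)!) := by
  have hcosh (s : ℝ) : ∫ u in (0:ℝ)..s, cosh u = sinh s := by
    simpa using integral_eq_sub_of_hasDerivAt (fun u _ => hasDerivAt_sinh u)
      (continuous_cosh.intervalIntegrable 0 s)
  have hsinh : ∫ u in (0:ℝ)..t, sinh u = cosh t - 1 := by
    simpa using integral_eq_sub_of_hasDerivAt (fun u _ => hasDerivAt_cosh u)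
      (continuous_sinh.intervalIntegrable 0 t)
  have hinner (s : ℝ) : ∫ u in (0:ℝ)..s, (M * cosh u + C * (u ^ k / k !)) =
      M * sinh s + C * (s ^ (k + 1) / (k + 1)!) := by
    rw [intervalIntegral.integral_add ((by fun_prop : Continuous _).intervalIntegrable _ _)
      ((by fun_prop : Continuous _).intervalIntegrable _ _), intervalIntegral.integral_const_mul,
      intervalIntegral.integral_const_mul, hcosh, integral_pow_div_factorial]
  simp only [doublePrimitive, hinner]
  rw [intervalIntegral.integral_add ((by fun_prop : Continuous _).intervalIntegrable _ _)
    ((by fun_prop : Continuous _).intervalIntegrable _ _), intervalIntegral.integral_const_mul,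
    intervalIntegral.integral_const_mul, hsinh, integral_pow_div_factorial]
section DelayGronwall

variable {e : ℝ → ℝ} {a b Δ T : ℝ}

lemma abs_le_cosh_add_pow_of_le_add_doublePrimitive (ha : 0 ≤ a) (hb : 0 ≤ b) (hΔ : 0 ≤ Δ)
    (hinit : ∀ s ∈ Icc (-Δ) 0, |e s| ≤ a)
    (hint : ∀ t ∈ Icc 0 T, |e t| ≤ a + doublePrimitive (fun u => |e (u - Δ)| + b) t)
    {C : ℝ} (hC : 0 ≤ C) {k : ℕ}
    (hk : ∀ t ∈ Icc 0 T, |e t| ≤ (a + b) * cosh t - b + C * (t ^ k / k !)) :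
    ∀ t ∈ Icc 0 T, |e t| ≤ (a + b) * cosh t - b + C * (t ^ (k + 2) / (k + 2)!) := by
  intro t ht
  have hmaj : ∀ u ∈ Icc 0 t, |(|e (u - Δ)| + b)| ≤ (a + b) * cosh u + C * (u ^ k / k !) := by
    intro u hu
    have hpow : 0 ≤ C * (u ^ k / k !) := by have := hu.1; positivity
    rw [abs_of_nonneg (by positivity)]
    rcases le_or_gt (u - Δ) 0 with hneg | hpos
    · nlinarith [hinit (u - Δ) ⟨by linarith [hu.1], hneg⟩, one_le_cosh u]
    · have hcosh : cosh (u - Δ) ≤ cosh u := by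
        rw [cosh_le_cosh, abs_of_pos hpos, abs_of_nonneg hu.1]
        linarith
      have hpow' : C * ((u - Δ) ^ k / k !) ≤ C * (u ^ k / k !) := by
        gcongr
        linarith
      nlinarith [hk (u - Δ) ⟨hpos.le, by linarith [hu.2, ht.2]⟩]
  calc |e t| ≤ a + doublePrimitive (fun u => |e (u - Δ)| + b) t := hint t ht
    _ ≤ a + doublePrimitive (fun u => (a + b) * cosh u + C * (u ^ k / k !)) t := by
      gcongr
      exact (le_abs_self _).trans (abs_doublePrimitive_le ht.1 (by fun_prop) hmaj)
    _ = _ := by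
      rw [doublePrimitive_cosh_add_pow]
      ring

/-- `(a + b) cosh t - b` solves `y = a + ∫₀ᵗ∫₀ˢ (y + b)`; Picard iteration starting from a bound
`B` of `|e|` on `[0, T]` leaves the error `B t^(2n) / (2n)!`. -/
lemma abs_le_of_le_add_doublePrimitive (he : Continuous e) (ha : 0 ≤ a) (hb : 0 ≤ b)
    (hΔ : 0 ≤ Δ) (hinit : ∀ s ∈ Icc (-Δ) 0, |e s| ≤ a)
    (hint : ∀ t ∈ Icc 0 T, |e t| ≤ a + doublePrimitive (fun u => |e (u - Δ)| + b) t) :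
    ∀ t ∈ Icc 0 T, |e t| ≤ (a + b) * cosh t - b := by
  obtain ⟨B, hB⟩ := isCompact_Icc.exists_bound_of_continuousOn (he.continuousOn (s := Icc 0 T))
  have hpicard : ∀ n : ℕ, ∀ t ∈ Icc 0 T,
      |e t| ≤ (a + b) * cosh t - b + max B 0 * (t ^ (2 * n) / (2 * n)!) := by
    intro n
    induction n with
    | zero =>
      intro t ht
      simp only [mul_zero, pow_zero, factorial_zero, cast_one, div_one, mul_one]
      have := hB t ht
      rw [Real.norm_eq_abs] at this
      nlinarith [le_max_left B 0, one_le_cosh t]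
    | succ n ih =>
      exact abs_le_cosh_add_pow_of_le_add_doublePrimitive ha hb hΔ hinit hint
        (le_max_right B 0) ih
  intro t ht
  have hlim : Tendsto (fun n : ℕ => (a + b) * cosh t - b + max B 0 * (t ^ (2 * n) / (2 * n)!))
      atTop (𝓝 ((a + b) * cosh t - b)) := by
    simpa using (((FloorSemiring.tendsto_pow_div_factorial_atTop t).comp
      (strictMono_mul_left_of_pos two_pos).tendsto_atTop).const_mul (max B 0)).const_add
        ((a + b) * cosh t - b)
  exact ge_of_tendsto' hlim fun n => hpicard n t ht

end DelayGronwall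

namespace IsDelayCosine

variable {Δ T : ℝ} {r : ℝ → ℝ}

lemma hasDerivAt (h : IsDelayCosine Δ r) (t : ℝ) : HasDerivAt r (deriv r t) t := by
  rcases le_or_gt 0 t with ht | ht
  · exact h.2.1 t ht
  · have hconst : HasDerivAt r 0 t :=
      (hasDerivAt_const t 1).congr_of_eventuallyEq
        (eventually_of_mem (Iio_mem_nhds ht) fun s hs => h.1 s (le_of_lt hs))
    rwa [hconst.deriv]

lemma continuous (h : IsDelayCosine Δ r) : Continuous r :=
  continuous_iff_continuousAt.2 fun t => (h.hasDerivAt t).continuousAt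

lemma eq_one_sub_doublePrimitive (h : IsDelayCosine Δ r) {t : ℝ} (ht : 0 ≤ t) :
    r t = 1 - doublePrimitive (fun u => r (u - Δ)) t := by
  have hderiv : ∀ s ∈ uIcc 0 t, HasDerivAt r (-∫ u in (0:ℝ)..s, r (u - Δ)) s := fun s hs => by
    rw [uIcc_of_le ht] at hs
    exact h.2.2 s hs.1 ▸ h.2.1 s hs.1
  have hftc := integral_eq_sub_of_hasDerivAt hderiv
    ((continuous_primitive_zero (h.continuous.comp (continuous_sub_right Δ))).neg
      |>.intervalIntegrable _ _)
  rw [intervalIntegral.integral_neg, h.1 0 le_rfl] at hftc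
  rw [doublePrimitive]
  linarith

lemma abs_le_cosh (h : IsDelayCosine Δ r) (hΔ : 0 ≤ Δ) (hT : 0 ≤ T) {x : ℝ} (hx : x ≤ T) :
    |r x| ≤ cosh T := by
  rcases le_or_gt x 0 with hx0 | hx0
  · simp [h.1 x hx0, one_le_cosh T]
  have hc := h.continuous
  have hgronwall := abs_le_of_le_add_doublePrimitive (e := r) (b := 0) (T := T) hc
    zero_le_one le_rfl hΔ (fun s hs => by simp [h.1 s hs.2]) fun t ht => by
      rw [h.eq_one_sub_doublePrimitive ht.1]
      refine (abs_sub _ _).trans ?_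
      rw [abs_one]
      gcongr
      exact abs_doublePrimitive_le ht.1 (by fun_prop) fun u _ => (add_zero _).ge
  calc |r x| ≤ cosh x := by simpa using hgronwall x ⟨hx0.le, hx⟩
    _ ≤ cosh T := by rwa [cosh_le_cosh, abs_of_pos hx0, abs_of_nonneg hT]

lemma abs_deriv_le (h : IsDelayCosine Δ r) (hΔ : 0 ≤ Δ) (hT : 0 ≤ T) {s : ℝ}
    (hs : s ≤ T) : |deriv r s| ≤ T * cosh T := by
  rcases lt_or_ge s 0 with hs0 | hs0
  · have hconst : deriv r s = 0 := by
      rw [Filter.EventuallyEq.deriv_eq (f := fun _ => (1:ℝ))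
        (eventually_of_mem (Iio_mem_nhds hs0) fun u hu => h.1 u (le_of_lt hu)), deriv_const]
    rw [hconst, abs_zero]
    positivity
  rw [h.2.2 s hs0, abs_neg, ← Real.norm_eq_abs]
  calc ‖∫ u in (0:ℝ)..s, r (u - Δ)‖ ≤ cosh T * |s - 0| :=
        norm_integral_le_of_norm_le_const fun u hu =>
          h.abs_le_cosh hΔ hT (by linarith [hu.2, max_le hT hs])
    _ ≤ T * cosh T := by
      rw [sub_zero, abs_of_nonneg hs0, mul_comm]
      gcongr

lemma abs_sub_le_of_le (h : IsDelayCosine Δ r) (hΔ : 0 ≤ Δ) (hT : 0 ≤ T) {x y : ℝ}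
    (hx : x ≤ T) (hy : y ≤ T) : |r x - r y| ≤ T * cosh T * |x - y| := by
  simpa only [Real.norm_eq_abs] using (convex_Iic T).norm_image_sub_le_of_norm_deriv_le
    (fun s _ => (h.hasDerivAt s).differentiableAt)
    (fun s hs => (Real.norm_eq_abs _).trans_le (h.abs_deriv_le hΔ hT hs)) hy hx

lemma abs_sub_le_abs_sub_delay {Δ' : ℝ} {r' : ℝ → ℝ} (h : IsDelayCosine Δ r)
    (h' : IsDelayCosine Δ' r') (hΔ : 0 ≤ Δ) (hΔ' : 0 ≤ Δ') {t : ℝ} (ht : 0 ≤ t)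
    (htT : t ≤ T) : |r t - r' t| ≤ T * cosh T ^ 2 * |Δ - Δ'| := by
  have hT : 0 ≤ T := ht.trans htT
  set b := T * cosh T * |Δ - Δ'|
  have hc := h.continuous
  have hc' := h'.continuous
  have hgronwall := abs_le_of_le_add_doublePrimitive (e := fun t => r t - r' t) (a := 0)
    (b := b) (T := T) (by fun_prop) le_rfl (by positivity) hΔ
    (fun s hs => by simp [h.1 s hs.2, h'.1 s hs.2]) fun t ht => by
      rw [zero_add, h.eq_one_sub_doublePrimitive ht.1, h'.eq_one_sub_doublePrimitive ht.1,
        sub_sub_sub_cancel_left, abs_sub_comm, ← doublePrimitive_sub (by fun_prop) (by fun_prop)]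
      refine abs_doublePrimitive_le ht.1 (by fun_prop) fun u hu => ?_
      calc |r (u - Δ) - r' (u - Δ')|
          ≤ |r (u - Δ) - r' (u - Δ)| + |r' (u - Δ) - r' (u - Δ')| := abs_sub_le _ _ _
        _ ≤ |r (u - Δ) - r' (u - Δ)| + b := by
          have := h'.abs_sub_le_of_le hΔ' hT (x := u - Δ) (y := u - Δ')
            (by linarith [hu.2, ht.2]) (by linarith [hu.2, ht.2])
          rw [sub_sub_sub_cancel_left, abs_sub_comm Δ' Δ] at this
          gcongr
  calc |r t - r' t| ≤ (0 + b) * cosh t - b := hgronwall t ⟨ht, htT⟩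
    _ ≤ b * cosh T := by
      have : cosh t ≤ cosh T := by rwa [cosh_le_cosh, abs_of_nonneg ht, abs_of_nonneg hT]
      nlinarith [one_le_cosh t, show 0 ≤ b by positivity]
    _ = T * cosh T ^ 2 * |Δ - Δ'| := by ring

lemma deriv_neg (h : IsDelayCosine Δ r) (hΔ : 0 ≤ Δ) {θ : ℝ} (hθ : IsFirstZero r θ) :
    deriv r θ < 0 := by
  rw [h.2.2 θ hθ.1.le, neg_lt_zero]
  refine intervalIntegral.intervalIntegral_pos_of_pos_on
    ((h.continuous.comp (continuous_sub_right Δ)).intervalIntegrable _ _) (fun u hu => ?_) hθ.1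
  rcases le_or_gt (u - Δ) 0 with hu0 | hu0
  · simp [h.1 _ hu0]
  · exact hθ.2.2 _ hu0.le (by linarith [hu.2])

end IsDelayCosine
lemma hasDerivAt_cos_max {t : ℝ} (ht : 0 ≤ t) :
    HasDerivAt (fun s => cos (max s 0)) (-sin t) t := by
  have hright : HasDerivWithinAt (fun s => cos (max s 0)) (-sin t) (Ici 0) t :=
    (hasDerivAt_cos t).hasDerivWithinAt.congr (fun s hs => by rw [max_eq_left hs])
      (by rw [max_eq_left ht])
  rcases ht.lt_or_eq with ht | rfl
  · exact hright.hasDerivAt (Ici_mem_nhds ht)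
  have hleft : HasDerivWithinAt (fun s => cos (max s 0)) (-sin 0) (Iic 0) 0 := by
    rw [sin_zero, neg_zero]
    exact (hasDerivWithinAt_const 0 _ 1).congr
      (fun s hs => by simp [max_eq_right (mem_Iic.1 hs)]) (by simp)
  simpa [Iic_union_Ici] using hleft.union hright

lemma isDelayCosine_zero_cos_max : IsDelayCosine 0 fun t => cos (max t 0) := by
  refine ⟨fun t ht => by simp [max_eq_right ht], fun t ht => ?_, fun t ht => ?_⟩
  · exact (hasDerivAt_cos_max ht).differentiableAt.hasDerivAt
  · rw [(hasDerivAt_cos_max ht).deriv, neg_inj,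
      integral_congr (g := cos) fun u hu => by simp [max_eq_left (uIcc_of_le ht ▸ hu).1],
      integral_cos, sin_zero, sub_zero]

namespace IsFirstZero

variable {ι : Type*} {l : Filter ι} {r : ι → ℝ → ℝ} {θ : ι → ℝ} {r₀ : ℝ → ℝ}

lemma eventually_le (hθ : ∀ᶠ i in l, IsFirstZero (r i) (θ i)) {x : ℝ} (hx : 0 ≤ x)
    (hr₀ : r₀ x < 0) (hr : Tendsto (fun i => r i x) l (𝓝 (r₀ x))) :
    ∀ᶠ i in l, θ i ≤ x := by
  filter_upwards [hθ, hr (Iio_mem_nhds hr₀)] with i hθi hri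
  by_contra! hlt
  exact (lt_asymm (hθi.2.2 x hx hlt)) hri

lemma eventually_lt (hθ : ∀ᶠ i in l, IsFirstZero (r i) (θ i)) {y : ℝ}
    (hc : ContinuousOn r₀ (Icc 0 y)) (hpos : ∀ t ∈ Icc 0 y, 0 < r₀ t)
    (hr : TendstoUniformlyOn r r₀ l (Icc 0 y)) : ∀ᶠ i in l, y < θ i := by
  obtain ⟨m, hm, hmr₀⟩ := isCompact_Icc.exists_forall_le' hc hpos
  filter_upwards [hθ, Metric.tendstoUniformlyOn_iff.1 hr m hm] with i hθi hri
  by_contra! hle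
  have hmem : θ i ∈ Icc 0 y := ⟨hθi.1.le, hle⟩
  have := hri _ hmem
  rw [Real.dist_eq, hθi.2.1, sub_zero] at this
  linarith [le_abs_self (r₀ (θ i)), hmr₀ _ hmem]

theorem tendsto {θ₀ : ℝ} (h₀ : IsFirstZero r₀ θ₀) (hc : ContinuousOn r₀ (Icc 0 θ₀))
    (hd : deriv r₀ θ₀ < 0) (hθ : ∀ᶠ i in l, IsFirstZero (r i) (θ i))
    (hr : ∀ T ≥ 0, TendstoUniformlyOn r r₀ l (Icc 0 T)) : Tendsto θ l (𝓝 θ₀) := by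
  have hneg : ∀ᶠ x in 𝓝[>] θ₀, r₀ x < 0 := by
    filter_upwards [nhdsWithin_le_nhds (eventually_nhdsWithin_sign_eq_of_deriv_neg hd h₀.2.1),
      self_mem_nhdsWithin] with x hx (hgt : θ₀ < x)
    rwa [_root_.sign_neg (sub_neg.2 hgt), sign_eq_neg_one_iff] at hx
  refine tendsto_order.2 ⟨fun a ha => ?_, fun b hb => ?_⟩
  · have hy : max a 0 < θ₀ := max_lt ha h₀.1
    filter_upwards [eventually_lt hθ (hc.mono (Icc_subset_Icc_right hy.le))
      (fun t ht => h₀.2.2 t ht.1 (ht.2.trans_lt hy)) (hr _ (le_max_right a 0))] with i hi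
    exact (le_max_left a 0).trans_lt hi
  · obtain ⟨x, hx, hxθ, hxb⟩ := (hneg.and (Ioo_mem_nhdsGT hb)).exists
    have hx0 : 0 ≤ x := (h₀.1.trans hxθ).le
    filter_upwards [eventually_le hθ hx0 hx ((hr x hx0).tendsto_at ⟨hx0, le_rfl⟩)] with i hi
    exact hi.trans_lt hxb

end IsFirstZero

lemma tendstoUniformlyOn_of_forall_isDelayCosine {r : ℝ → ℝ → ℝ}
    (hr : ∀ Δ, 0 ≤ Δ → IsDelayCosine Δ (r Δ)) {Δ₀ : ℝ} (hΔ₀ : 0 ≤ Δ₀) {T : ℝ} (hT : 0 ≤ T) :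
    TendstoUniformlyOn r (r Δ₀) (𝓝[Ici 0] Δ₀) (Icc 0 T) := by
  refine Metric.tendstoUniformlyOn_iff.2 fun ε hε => ?_
  set K := T * cosh T ^ 2
  filter_upwards [self_mem_nhdsWithin, nhdsWithin_le_nhds
    (Metric.ball_mem_nhds Δ₀ (show 0 < ε / (K + 1) by positivity))] with Δ hΔ hΔε t ht
  rw [Real.dist_eq]
  calc |r Δ₀ t - r Δ t| ≤ K * |Δ₀ - Δ| :=
        (hr Δ₀ hΔ₀).abs_sub_le_abs_sub_delay (hr Δ hΔ) hΔ₀ hΔ ht.1 ht.2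
    _ ≤ (K + 1) * dist Δ Δ₀ := by
      rw [abs_sub_comm, ← Real.dist_eq]
      nlinarith [dist_nonneg (x := Δ) (y := Δ₀)]
    _ < ε := (lt_div_iff₀' (by positivity)).1 hΔε

/-- `r_Δ → cos` uniformly on `[0, π/2]` as `Δ → 0⁺`, and `Δ ↦ θ_Δ` is
continuous on `[0,∞)`. -/
theorem rDelta_uniform_convergence_theta_continuous
    (r : ℝ → ℝ → ℝ) (θ : ℝ → ℝ)
    (hr : ∀ Δ, 0 ≤ Δ → IsDelayCosine Δ (r Δ))
    (hθ : ∀ Δ, 0 ≤ Δ → IsFirstZero (r Δ) (θ Δ)) :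
    (∀ ε > (0:ℝ), ∃ δ > (0:ℝ), ∀ Δ, 0 < Δ → Δ < δ →
      ∀ t ∈ Set.Icc (0:ℝ) (Real.pi / 2), |r Δ t - Real.cos t| < ε) ∧
    ContinuousOn θ (Set.Ici 0) := by
  refine ⟨fun ε hε => ?_, fun Δ₀ hΔ₀ => ?_⟩
  · set K := π / 2 * cosh (π / 2) ^ 2
    refine ⟨ε / (K + 1), by positivity, fun Δ hΔ hΔε t ht => ?_⟩
    have hbound := (hr Δ hΔ.le).abs_sub_le_abs_sub_delay isDelayCosine_zero_cos_max hΔ.le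
      le_rfl ht.1 ht.2
    rw [max_eq_left ht.1, sub_zero, abs_of_pos hΔ] at hbound
    calc |r Δ t - cos t| ≤ K * Δ := hbound
      _ ≤ (K + 1) * Δ := by linarith
      _ < ε := (lt_div_iff₀' (by positivity)).1 hΔε
  · have hrΔ₀ := hr Δ₀ hΔ₀
    exact (hθ Δ₀ hΔ₀).tendsto hrΔ₀.continuous.continuousOn (hrΔ₀.deriv_neg hΔ₀ (hθ Δ₀ hΔ₀))
      (eventually_nhdsWithin_of_forall hθ)
      fun _ => tendstoUniformlyOn_of_forall_isDelayCosine hr hΔ₀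
end

section
/- For every fixed Δ ≥ 0 and ρ > 0, the recursive sequence (β_n, ϖ_n) is well defined: for each n there exists a unique ϖ_n ∈ (0,∞) satisfying ∫_{−ϖ_n}^0 (∫_{−ϖ_n}^s max{β_n(w), g(w)} dw) ds = 1. Moreover, β_{n+1}(t) ≤ β_n(t) for all t ≤ 0 and ϖ_n ≤ ϖ_{n+1} for every n = 0, 1, 2, ... -/
open MeasureTheory Set Filter

/-!
By the Cauchy formula for repeated integration,
`doubleInt g β c = ∫ w in -c..0, -w * max (β w) (g w)`. When `β` is continuous, positive on
`(-∞, 0)` and equal to `1` far to the left, this integrand is positive on `(-∞, 0)` and at least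
`1` far to the left, so `c ↦ doubleInt g β c` is continuous, strictly increasing on `[0, ∞)`, and
takes the value `1` at exactly one `c > 0`. The next `β` inherits the three properties, so the
recursion never stops.

The step `β ↦ β_next` is monotone on `(-∞, 0]`: a smaller `β` has a smaller integrand, hence a
larger `ϖ`; on `[-ϖ, 0]` the difference of the two inner integrals `∫ w in -ϖ..s` is then
nondecreasing in `s` with nonnegative integral, so its tail integrals `∫ s in t..0`, which are the
differences of the next `β`'s, are nonnegative. Starting from `β_1 ≤ 1 = β_0`, induction gives
`β_{n+1} ≤ β_n`, and then `ϖ_n ≤ ϖ_{n+1}`.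
-/

theorem integral_integral_eq_integral_sub_mul {f : ℝ → ℝ} {a b : ℝ}
    (hf : IntervalIntegrable f volume a b) :
    ∫ s in a..b, ∫ w in a..s, f w = ∫ w in a..b, (b - w) * f w := by
  set P : ℝ → ℝ := fun s => ∫ w in a..s, f w
  have hP : AbsolutelyContinuousOnInterval P a b :=
    hf.absolutelyContinuousOnInterval_intervalIntegral left_mem_uIcc
  have hu : AbsolutelyContinuousOnInterval (fun s => s - b) a b :=
    (contDiff_id.sub contDiff_const).contDiffOn.absolutelyContinuousOnInterval
  have hderiv : ∀ᵐ x, x ∈ uIoc a b → (x - b) * deriv P x = -((b - x) * f x) := by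
    filter_upwards [hf.ae_hasDerivAt_integral] with x hx hxab
    rw [(hx (uIoc_subset_uIcc hxab) a left_mem_uIcc).deriv]
    ring
  have hparts := hu.integral_mul_deriv_eq_deriv_mul hP
  rw [intervalIntegral.integral_congr_ae hderiv, intervalIntegral.integral_neg] at hparts
  simpa [P] using hparts.symm

section IntegralToZero

variable {h : ℝ → ℝ}

theorem continuous_integral_neg_zero (hint : ∀ a b, IntervalIntegrable h volume a b) :
    Continuous fun c => ∫ w in -c..0, h w := by
  have := ((intervalIntegral.continuous_primitive hint 0).comp continuous_neg).neg
  convert this using 2 with c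
  exact intervalIntegral.integral_symm _ _

theorem strictMonoOn_integral_neg_zero (hint : ∀ a b, IntervalIntegrable h volume a b)
    (hpos : ∀ w < 0, 0 < h w) : StrictMonoOn (fun c => ∫ w in -c..0, h w) (Ici 0) := by
  intro c₁ hc₁ c₂ _ hlt
  have hsplit : (∫ w in -c₂..-c₁, h w) + ∫ w in -c₁..0, h w = ∫ w in -c₂..0, h w :=
    intervalIntegral.integral_add_adjacent_intervals (hint _ _) (hint _ _)
  have hgap : 0 < ∫ w in -c₂..-c₁, h w :=
    intervalIntegral.intervalIntegral_pos_of_pos_on (hint _ _)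
      (fun w hw => hpos w (by linarith [hw.2, mem_Ici.1 hc₁])) (by linarith)
  dsimp only
  linarith

theorem existsUnique_integral_neg_zero_eq_one (hint : ∀ a b, IntervalIntegrable h volume a b)
    (hpos : ∀ w < 0, 0 < h w) (hbot : ∀ᶠ w in atBot, 1 ≤ h w) :
    ∃! c, 0 < c ∧ ∫ w in -c..0, h w = 1 := by
  obtain ⟨a, ha⟩ := eventually_atBot.1 hbot
  set m := min a (-1)
  have hm : m < 0 := by simp [m]
  have hlarge : 1 ≤ ∫ w in -(1 - m)..0, h w := by
    have hsplit : (∫ w in (m - 1)..m, h w) + ∫ w in m..0, h w = ∫ w in (m - 1)..0, h w :=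
      intervalIntegral.integral_add_adjacent_intervals (hint _ _) (hint _ _)
    have hfar : 1 ≤ ∫ w in (m - 1)..m, h w := by
      simpa using intervalIntegral.integral_mono_on (by linarith : m - 1 ≤ m)
        intervalIntegrable_const (hint _ _) fun w hw => ha w (hw.2.trans (min_le_left a (-1)))
    have hnear : 0 < ∫ w in m..0, h w :=
      intervalIntegral.intervalIntegral_pos_of_pos_on (hint _ _) (fun w hw => hpos w hw.2) hm
    rw [neg_sub]
    linarith
  obtain ⟨c, hc, hc1⟩ := intermediate_value_Icc (by linarith : (0 : ℝ) ≤ 1 - m)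
    (continuous_integral_neg_zero hint).continuousOn
    (show (1 : ℝ) ∈ Icc (∫ w in -0..0, h w) _ from ⟨by simp, hlarge⟩)
  have hc0 : 0 < c := hc.1.lt_of_ne (by rintro rfl; simp at hc1)
  exact ⟨c, ⟨hc0, hc1⟩, fun c' ⟨hc', hc'1⟩ =>
    (strictMonoOn_integral_neg_zero hint hpos).injOn hc'.le hc0.le (hc'1.trans hc1.symm)⟩

end IntegralToZero

theorem integral_tail_nonneg_of_monotoneOn {δ : ℝ → ℝ} {a b t : ℝ}
    (hδ : MonotoneOn δ (Icc a b)) (htot : 0 ≤ ∫ s in a..b, δ s) (ht : t ∈ Icc a b) :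
    0 ≤ ∫ s in t..b, δ s := by
  rcases le_or_gt 0 (δ t) with hδt | hδt
  · exact intervalIntegral.integral_nonneg ht.2 fun s hs =>
      hδt.trans (hδ ht ⟨ht.1.trans hs.1, hs.2⟩ hs.1)
  · have hint : ∀ u v, u ∈ Icc a b → v ∈ Icc a b → IntervalIntegrable δ volume u v :=
      fun u v hu hv => (hδ.mono (uIcc_subset_Icc hu hv)).intervalIntegrable
    have hab : a ≤ b := ht.1.trans ht.2
    have hsplit := intervalIntegral.integral_add_adjacent_intervals
      (hint a t (left_mem_Icc.2 hab) ht) (hint t b ht (right_mem_Icc.2 hab))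
    have hhead : 0 ≤ ∫ s in a..t, -δ s := intervalIntegral.integral_nonneg ht.1
      fun s hs => neg_nonneg.2 ((hδ ⟨hs.1, hs.2.trans ht.2⟩ ht hs.2).trans hδt.le)
    rw [intervalIntegral.integral_neg] at hhead
    linarith

theorem monotoneOn_integral_sub_integral {f f' : ℝ → ℝ} {a b c c' : ℝ}
    (hf : ∀ u v, IntervalIntegrable f volume u v) (hf' : ∀ u v, IntervalIntegrable f' volume u v)
    (hle : ∀ w ∈ Icc a b, f' w ≤ f w) :
    MonotoneOn (fun s => (∫ w in c..s, f w) - ∫ w in c'..s, f' w) (Icc a b) := by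
  intro x hx y hy hxy
  have hadd := intervalIntegral.integral_add_adjacent_intervals (hf c x) (hf x y)
  have hadd' := intervalIntegral.integral_add_adjacent_intervals (hf' c' x) (hf' x y)
  have hxy' : ∫ w in x..y, f' w ≤ ∫ w in x..y, f w := intervalIntegral.integral_mono_on hxy
    (hf' x y) (hf x y) fun w hw => hle w ⟨hx.1.trans hw.1, hw.2.trans hy.2⟩
  dsimp only
  linarith

structure IsAdmissible (β : ℝ → ℝ) : Prop where
  continuous : Continuous β
  eventually_eq_one : ∀ᶠ t in atBot, β t = 1
  pos : ∀ t < 0, 0 < β t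

section Recursion

variable {g β β' : ℝ → ℝ}

/-- `Classical.epsilon` is an arbitrary number when no such `c` exists; `varpi_spec` rules this
out for admissible `β`. -/
noncomputable def varpi (g β : ℝ → ℝ) : ℝ :=
  Classical.epsilon fun c => 0 < c ∧ doubleInt g β c = 1

/-- Clamping the upper limit at `-varpi g β` makes the next `β` equal to `1` on
`(-∞, -varpi g β]` and continuous. -/
noncomputable def nextBeta (g β : ℝ → ℝ) (t : ℝ) : ℝ :=
  1 - ∫ s in -varpi g β..max (-varpi g β) t, ∫ w in -varpi g β..s, max (β w) (g w)

noncomputable def betaSeq (g : ℝ → ℝ) : ℕ → ℝ → ℝ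
  | 0 => 1
  | n + 1 => nextBeta g (betaSeq g n)

theorem Continuous.intervalIntegrable_max (hβ : Continuous β)
    (hg : ∀ a b, IntervalIntegrable g volume a b) (a b : ℝ) :
    IntervalIntegrable (fun w => max (β w) (g w)) volume a b :=
  ⟨(hβ.intervalIntegrable a b).1.sup (hg a b).1, (hβ.intervalIntegrable a b).2.sup (hg a b).2⟩

theorem Continuous.intervalIntegrable_neg_mul_max (hβ : Continuous β)
    (hg : ∀ a b, IntervalIntegrable g volume a b) (a b : ℝ) :
    IntervalIntegrable (fun w => -w * max (β w) (g w)) volume a b :=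
  (hβ.intervalIntegrable_max hg a b).continuousOn_mul continuous_neg.continuousOn

theorem Continuous.continuous_primitive_max (hβ : Continuous β)
    (hg : ∀ a b, IntervalIntegrable g volume a b) (c : ℝ) :
    Continuous fun s => ∫ w in c..s, max (β w) (g w) :=
  intervalIntegral.continuous_primitive (hβ.intervalIntegrable_max hg) c

theorem IsAdmissible.neg_mul_max_pos (hb : IsAdmissible β) {w : ℝ} (hw : w < 0) :
    0 < -w * max (β w) (g w) :=
  mul_pos (neg_pos.2 hw) ((hb.pos w hw).trans_le (le_max_left _ _))

theorem doubleInt_eq_integral (hβ : Continuous β) (hg : ∀ a b, IntervalIntegrable g volume a b)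
    (c : ℝ) : doubleInt g β c = ∫ w in -c..0, -w * max (β w) (g w) := by
  rw [doubleInt, integral_integral_eq_integral_sub_mul (hβ.intervalIntegrable_max hg _ _)]
  simp only [zero_sub]

theorem IsAdmissible.existsUnique_doubleInt_eq_one (hb : IsAdmissible β)
    (hg : ∀ a b, IntervalIntegrable g volume a b) : ∃! c, 0 < c ∧ doubleInt g β c = 1 := by
  simp only [doubleInt_eq_integral hb.continuous hg]
  refine existsUnique_integral_neg_zero_eq_one (hb.continuous.intervalIntegrable_neg_mul_max hg)
    (fun _ => hb.neg_mul_max_pos) ?_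
  filter_upwards [hb.eventually_eq_one, eventually_le_atBot (-1)] with w hw1 hw
  exact one_le_mul_of_one_le_of_one_le (by linarith) (hw1 ▸ le_max_left _ _)

theorem IsAdmissible.varpi_spec (hb : IsAdmissible β)
    (hg : ∀ a b, IntervalIntegrable g volume a b) :
    0 < varpi g β ∧ doubleInt g β (varpi g β) = 1 :=
  Classical.epsilon_spec (hb.existsUnique_doubleInt_eq_one hg).exists

theorem IsAdmissible.eq_varpi (hb : IsAdmissible β)
    (hg : ∀ a b, IntervalIntegrable g volume a b) {c : ℝ} (hc : 0 < c)
    (hc1 : doubleInt g β c = 1) : c = varpi g β :=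
  (hb.existsUnique_doubleInt_eq_one hg).unique ⟨hc, hc1⟩ (hb.varpi_spec hg)

theorem nextBeta_of_le {t : ℝ} (ht : t ≤ -varpi g β) : nextBeta g β t = 1 := by
  rw [nextBeta, max_eq_left ht, intervalIntegral.integral_same, sub_zero]

theorem nextBeta_of_ge {t : ℝ} (ht : -varpi g β ≤ t) :
    nextBeta g β t = 1 - ∫ s in -varpi g β..t, ∫ w in -varpi g β..s, max (β w) (g w) := by
  rw [nextBeta, max_eq_right ht]

theorem nextBeta_le_one (hg0 : ∀ w, 0 ≤ g w) (t : ℝ) : nextBeta g β t ≤ 1 := by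
  have hinner : ∀ s ≥ -varpi g β, 0 ≤ ∫ w in -varpi g β..s, max (β w) (g w) := fun s hs =>
    intervalIntegral.integral_nonneg hs fun w _ => (hg0 w).trans (le_max_right _ _)
  rw [nextBeta, sub_le_self_iff]
  exact intervalIntegral.integral_nonneg (le_max_left _ t) fun s hs => hinner s hs.1

theorem IsAdmissible.nextBeta_eq_integral (hb : IsAdmissible β)
    (hg : ∀ a b, IntervalIntegrable g volume a b) {t : ℝ} (ht : -varpi g β ≤ t) :
    nextBeta g β t = ∫ s in t..0, ∫ w in -varpi g β..s, max (β w) (g w) := by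
  have hinner := (hb.continuous.continuous_primitive_max hg (-varpi g β)).intervalIntegrable
    (μ := volume)
  have hsplit := intervalIntegral.integral_add_adjacent_intervals (hinner (-varpi g β) t)
    (hinner t 0)
  have htotal : doubleInt g β (varpi g β) = 1 := (hb.varpi_spec hg).2
  rw [doubleInt] at htotal
  rw [nextBeta_of_ge ht]
  linarith

theorem isAdmissible_nextBeta (hb : IsAdmissible β)
    (hg : ∀ a b, IntervalIntegrable g volume a b) : IsAdmissible (nextBeta g β) where
  continuous := continuous_const.sub <| (intervalIntegral.continuous_primitive
    (hb.continuous.continuous_primitive_max hg _).intervalIntegrable _).comp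
    (continuous_const.max continuous_id)
  eventually_eq_one := eventually_atBot.2 ⟨_, fun _ => nextBeta_of_le⟩
  pos t ht := by
    rcases le_or_gt t (-varpi g β) with hle | hlt
    · rw [nextBeta_of_le hle]
      exact one_pos
    rw [hb.nextBeta_eq_integral hg hlt.le]
    refine intervalIntegral.intervalIntegral_pos_of_pos_on ?_ (fun s hs => ?_) ht
    · exact (hb.continuous.continuous_primitive_max hg _).intervalIntegrable _ _
    · exact intervalIntegral.intervalIntegral_pos_of_pos_on
        (hb.continuous.intervalIntegrable_max hg _ _)
        (fun w hw => (hb.pos w (hw.2.trans hs.2)).trans_le (le_max_left _ _)) (hlt.trans hs.1)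

theorem IsAdmissible.varpi_le_varpi (hb : IsAdmissible β) (hb' : IsAdmissible β')
    (hg : ∀ a b, IntervalIntegrable g volume a b) (hle : ∀ t ≤ 0, β' t ≤ β t) :
    varpi g β ≤ varpi g β' := by
  obtain ⟨hW, hW1⟩ := hb.varpi_spec hg
  obtain ⟨hW', hW'1⟩ := hb'.varpi_spec hg
  by_contra! hlt
  have hsmaller : doubleInt g β' (varpi g β') ≤ doubleInt g β (varpi g β') := by
    rw [doubleInt_eq_integral hb.continuous hg, doubleInt_eq_integral hb'.continuous hg]
    refine intervalIntegral.integral_mono_on (by linarith)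
      (hb'.continuous.intervalIntegrable_neg_mul_max hg _ _)
      (hb.continuous.intervalIntegrable_neg_mul_max hg _ _) fun w hw => ?_
    exact mul_le_mul_of_nonneg_left (max_le_max (hle w hw.2) le_rfl) (neg_nonneg.2 hw.2)
  have hshorter : doubleInt g β (varpi g β') < doubleInt g β (varpi g β) := by
    simp only [doubleInt_eq_integral hb.continuous hg]
    exact strictMonoOn_integral_neg_zero (hb.continuous.intervalIntegrable_neg_mul_max hg)
      (fun _ => hb.neg_mul_max_pos) hW'.le hW.le hlt
  linarith

theorem IsAdmissible.nextBeta_mono (hb : IsAdmissible β) (hb' : IsAdmissible β')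
    (hg : ∀ a b, IntervalIntegrable g volume a b) (hg0 : ∀ w, 0 ≤ g w)
    (hle : ∀ t ≤ 0, β' t ≤ β t) {t : ℝ} (ht : t ≤ 0) : nextBeta g β' t ≤ nextBeta g β t := by
  have hW := hb.varpi_le_varpi hb' hg hle
  rcases le_or_gt t (-varpi g β) with htW | htW
  · rw [nextBeta_of_le htW]
    exact nextBeta_le_one hg0 t
  set W := varpi g β
  set W' := varpi g β'
  have hf := hb.continuous.intervalIntegrable_max hg
  have hf' := hb'.continuous.intervalIntegrable_max hg
  have hinner := (hb.continuous.continuous_primitive_max hg (-W)).intervalIntegrable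
    (μ := volume)
  have hinner' := (hb'.continuous.continuous_primitive_max hg (-W')).intervalIntegrable
    (μ := volume)
  have hgap : 0 ≤ ∫ s in -W'..-W, ∫ w in -W'..s, max (β' w) (g w) :=
    intervalIntegral.integral_nonneg (by linarith) fun s hs =>
      intervalIntegral.integral_nonneg hs.1 fun w _ => (hg0 w).trans (le_max_right _ _)
  have hsplit' := intervalIntegral.integral_add_adjacent_intervals (hinner' (-W') (-W))
    (hinner' (-W) 0)
  have htotal := (hb.varpi_spec hg).2
  have htotal' := (hb'.varpi_spec hg).2
  rw [doubleInt] at htotal htotal'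
  have htail := integral_tail_nonneg_of_monotoneOn
    (monotoneOn_integral_sub_integral hf hf' fun w hw => max_le_max (hle w hw.2) le_rfl)
    (by rw [intervalIntegral.integral_sub (hinner _ _) (hinner' _ _)]; linarith) ⟨htW.le, ht⟩
  rw [intervalIntegral.integral_sub (hinner _ _) (hinner' _ _)] at htail
  rw [hb.nextBeta_eq_integral hg htW.le, hb'.nextBeta_eq_integral hg (by linarith)]
  linarith

end Recursion

section Sequence

variable {g : ℝ → ℝ}

theorem isAdmissible_betaSeq (hg : ∀ a b, IntervalIntegrable g volume a b) :
    ∀ n, IsAdmissible (betaSeq g n)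
  | 0 => ⟨continuous_const, Eventually.of_forall fun _ => rfl, fun _ _ => one_pos⟩
  | n + 1 => isAdmissible_nextBeta (isAdmissible_betaSeq hg n) hg

theorem betaSeq_succ_le (hg : ∀ a b, IntervalIntegrable g volume a b) (hg0 : ∀ w, 0 ≤ g w) :
    ∀ n, ∀ t ≤ 0, betaSeq g (n + 1) t ≤ betaSeq g n t
  | 0 => fun t _ => nextBeta_le_one hg0 t
  | n + 1 => fun _ ht => (isAdmissible_betaSeq hg n).nextBeta_mono
      (isAdmissible_betaSeq hg (n + 1)) hg hg0 (betaSeq_succ_le hg hg0 n) ht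

end Sequence

section DelayCosine

variable {Δ ρ θ : ℝ} {r : ℝ → ℝ}

theorem IsDelayCosine.continuous_s10 (hr : IsDelayCosine Δ r) : Continuous r := by
  refine continuous_iff_continuousAt.2 fun x => ?_
  rcases lt_or_ge x 0 with hx | hx
  · exact continuousAt_const.congr <| eventually_of_mem (Iio_mem_nhds hx) fun y hy =>
      (hr.1 y hy.le).symm
  · exact (hr.2.1 x hx).continuousAt

theorem IsFirstZero.nonneg_of_le (hθ : IsFirstZero r θ) (hr : IsDelayCosine Δ r) {x : ℝ}
    (hx : x ≤ θ) : 0 ≤ r x := by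
  rcases le_or_gt x 0 with hx0 | hx0
  · rw [hr.1 x hx0]
    exact zero_le_one
  rcases hx.eq_or_lt with rfl | hxθ
  · exact hθ.2.1.ge
  · exact (hθ.2.2 x hx0.le hxθ).le

theorem gAux_nonneg (hρ : 0 ≤ ρ) (hr : IsDelayCosine Δ r) (hθ : IsFirstZero r θ) (w : ℝ) :
    0 ≤ gAux ρ Δ θ r w :=
  indicator_nonneg (fun _ hw => mul_nonneg hρ (hθ.nonneg_of_le hr (by linarith [hw.1]))) w

theorem gAux_intervalIntegrable (hr : Continuous r) (a b : ℝ) :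
    IntervalIntegrable (gAux ρ Δ θ r) volume a b :=
  ((continuous_const.mul (hr.comp (by fun_prop))).integrableOn_Icc.integrable_indicator
    measurableSet_Icc).intervalIntegrable

end DelayCosine

theorem beta_seq_well_defined_general
    (Δ ρ : ℝ) (hρ : 0 < ρ)
    (r : ℝ → ℝ) (θ : ℝ) (hr : IsDelayCosine Δ r) (hθ : IsFirstZero r θ) :
    ∃ β : ℕ → ℝ → ℝ, ∃ ϖ : ℕ → ℝ,
      IsBetaSeq (gAux ρ Δ θ r) β ϖ ∧
      (∀ n : ℕ, ∀ c : ℝ, 0 < c → doubleInt (gAux ρ Δ θ r) (β n) c = 1 → c = ϖ n) ∧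
      (∀ n : ℕ, ∀ t ≤ (0:ℝ), β (n+1) t ≤ β n t) ∧
      (∀ n : ℕ, ϖ n ≤ ϖ (n+1)) := by
  set g := gAux ρ Δ θ r
  have hg : ∀ a b, IntervalIntegrable g volume a b := gAux_intervalIntegrable hr.continuous_s10
  have hg0 : ∀ w, 0 ≤ g w := gAux_nonneg hρ.le hr hθ
  have hadm := isAdmissible_betaSeq hg
  refine ⟨betaSeq g, fun n => varpi g (betaSeq g n),
    ⟨fun _ _ => rfl, fun n => ⟨(hadm n).varpi_spec hg, fun _ => nextBeta_of_le,
      fun _ ht _ => nextBeta_of_ge ht⟩⟩,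
    fun n _ hc hc1 => (hadm n).eq_varpi hg hc hc1, betaSeq_succ_le hg hg0,
    fun n => (hadm n).varpi_le_varpi (hadm (n + 1)) hg (betaSeq_succ_le hg hg0 n)⟩

/-- the sequences `β_n`, `ϖ_n` are well defined, `β_n` is pointwise
nonincreasing and `ϖ_n` is nondecreasing. -/
theorem beta_seq_well_defined
    (Δ ρ : ℝ) (hΔ : 0 ≤ Δ) (hρ : 0 < ρ)
    (r : ℝ → ℝ) (θ : ℝ) (hr : IsDelayCosine Δ r) (hθ : IsFirstZero r θ) :
    ∃ β : ℕ → ℝ → ℝ, ∃ ϖ : ℕ → ℝ,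
      IsBetaSeq (gAux ρ Δ θ r) β ϖ ∧
      (∀ n : ℕ, ∀ c : ℝ, 0 < c → doubleInt (gAux ρ Δ θ r) (β n) c = 1 → c = ϖ n) ∧
      (∀ n : ℕ, ∀ t ≤ (0:ℝ), β (n+1) t ≤ β n t) ∧
      (∀ n : ℕ, ϖ n ≤ ϖ (n+1)) :=
  beta_seq_well_defined_general Δ ρ hρ r θ hr hθ
end
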